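/- Every \alpha \in \Delta_0^+ satisfies exactly one of the following three conditions: (a) \alpha \in \Delta_0'^+, i.e. the coordinates of \alpha at 0 and 1 both vanish; (b) \alpha + \sigma(\alpha) \in \mathbb{Z}_{>0}\cdot\delta; (c) there exists \beta \in \Delta_0' with \sigma(\beta) \ne \beta such that \alpha + \sigma(\alpha) = \delta + \beta + \sigma(\beta). -/

import Mathlib

/-!
Statement 6: For the affine root system of type `D_n^{(1)}` (`n ≥ 4`) with the
admissible diagram automorphism `σ` swapping `α_0 ↔ α_1` and `α_{n-1} ↔ α_n`,
every `α ∈ Δ₀⁺` satisfies exactly one of: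
(a) `α ∈ Δ₀'⁺` (coordinates at `0` and `1` vanish);
(b) `α + σ(α) ∈ ℤ_{>0}·δ`;
(c) `∃ β ∈ Δ₀'` with `σ(β) ≠ β` and `α + σ(α) = δ + β + σ(β)`.
-/

namespace Stmt6

/-- The root lattice `Q = ⨁_{i ∈ I} ℤ α_i` for `I = {0,1,…,n}`. -/
abbrev Q (n : ℕ) := Fin (n + 1) → ℤ

/-- The edges of the Dynkin diagram of affine type `D_n^{(1)}`. -/
abbrev edge (n i j : ℕ) : Prop :=
  (i + 1 = j ∧ 2 ≤ i ∧ j ≤ n - 1) ∨ (j + 1 = i ∧ 2 ≤ j ∧ i ≤ n - 1) ∨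
  (i = 0 ∧ j = 2) ∨ (i = 2 ∧ j = 0) ∨ (i = 1 ∧ j = 2) ∨ (i = 2 ∧ j = 1) ∨
  (i = n - 2 ∧ j = n) ∨ (i = n ∧ j = n - 2)

/-- The generalized Cartan matrix of type `D_n^{(1)}`. -/
def CM (n : ℕ) (i j : Fin (n + 1)) : ℤ :=
  if i = j then 2 else if edge n (i : ℕ) (j : ℕ) then -1 else 0

/-- The symmetric bilinear form `B` on `Q` determined by the Cartan matrix. -/
def B (n : ℕ) (v w : Q n) : ℤ := ∑ i, ∑ j, v i * CM n i j * w j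

/-- The set of positive real roots. -/
def ΔrePos (n : ℕ) : Set (Q n) := {v | (∀ i, 0 ≤ v i) ∧ B n v v = 2}

/-- The set `Δ₀⁺` of positive roots of the finite root system of type `D_n`. -/
def Δ0Pos (n : ℕ) : Set (Q n) := {v | v ∈ ΔrePos n ∧ v 0 = 0}

/-- The primitive null root `δ`. -/
def δ (n : ℕ) : Q n := fun i =>
  if (i : ℕ) = 0 ∨ (i : ℕ) = 1 ∨ (i : ℕ) = n - 1 ∨ (i : ℕ) = n then 1 else 2

/-- The involution of the index set `{0,…,n}` swapping `0 ↔ 1` and `n-1 ↔ n`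
(for `n ≥ 4`). -/
def τ (n : ℕ) (i : Fin (n + 1)) : Fin (n + 1) :=
  ⟨if (i : ℕ) = 0 then min 1 n else if (i : ℕ) = 1 then 0
    else if (i : ℕ) = n - 1 then n else if (i : ℕ) = n then n - 1 else (i : ℕ),
   by have := i.isLt; split_ifs <;> omega⟩

/-- The admissible diagram automorphism `σ` (on coordinates). -/
def σmap (n : ℕ) (v : Q n) : Q n := fun i => v (τ n i)

/-- The `σ`-stable subsystem `Δ₀'` of type `D_{n-1}` supported on `I ∖ {0, 1}`. -/
def Δ0' (n : ℕ) : Set (Q n) := {v | B n v v = 2 ∧ v 0 = 0 ∧ v 1 = 0}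

/-- The positive part `Δ₀'⁺ = Δ₀' ∩ ℕ^I`. -/
def Δ0'Pos (n : ℕ) : Set (Q n) := {v | v ∈ Δ0' n ∧ ∀ i, 0 ≤ v i}

/-!
On vectors with `v₀ = 0`, `B(v, v)` is the quadratic form of `D_n`, which is the sum of squares
`v₁² + ∑ (v_{k+1} - v_k)² + (v_{n-1} + v_n - v_{n-2})² + (v_n - v_{n-1})²`.
For `α ∈ Δ₀⁺` this forces `α₁ ∈ {0, 1}`, and `α₁ = 0` is case (a).
If `α₁ = 1`, exactly one of the remaining squares equals `1`. If it is `(α_n - α_{n-1})²`, all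
other differences vanish, `α = α₁ + ⋯ + α_{n-2} + α_{n-1 or n}` and `α + σα = δ`. Otherwise
`α_n = α_{n-1}`, and with `θ = α₁ + ⋯ + α_{n-1}` (so that `θ + σθ = δ`) the vector `β = α - θ`
is a root of `Δ₀'` with `σβ ≠ β` and `α + σα = δ + β + σβ`.
The cases are exclusive: coordinate `0` of `α + σα` is `α₁`, and a root `β` with `β₀ = 0` is
never `σ`-anti-invariant, since then its sum of squares is `4 β_n²`.
-/

open Finset

variable {n : ℕ}

/-- Coordinates indexed by `ℕ` and extended by zero, so that index shifts such as `k + 2` need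
no bound proofs. -/
def coord (v : Q n) (k : ℕ) : ℤ := if h : k < n + 1 then v ⟨k, h⟩ else 0

lemma coord_val (v : Q n) (i : Fin (n + 1)) : coord v i = v i := dif_pos i.isLt

lemma coord_of_lt (v : Q n) {k : ℕ} (hk : k < n + 1) : coord v k = v ⟨k, hk⟩ := dif_pos hk

lemma coord_of_gt (v : Q n) {k : ℕ} (hk : n < k) : coord v k = 0 := dif_neg (by omega)

lemma coord_zero (v : Q n) : coord v 0 = v 0 := coord_val v 0

lemma coord_one (hn : 1 ≤ n) (v : Q n) : coord v 1 = v 1 := by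
  rw [← coord_val v 1, Fin.val_one', Nat.mod_eq_of_lt (by omega)]

lemma eq_of_coord_eq {v w : Q n} (h : ∀ k < n + 1, coord v k = coord w k) : v = w :=
  funext fun i => by rw [← coord_val v, ← coord_val w, h i i.isLt]

lemma coord_add (v w : Q n) : coord (v + w) = coord v + coord w := by
  ext k; by_cases hk : k < n + 1 <;> simp [coord, hk]

lemma coord_sub (v w : Q n) : coord (v - w) = coord v - coord w := by
  ext k; by_cases hk : k < n + 1 <;> simp [coord, hk]

lemma coord_σmap (hn : 4 ≤ n) (v : Q n) (k : ℕ) :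
    coord (σmap n v) k = coord v (if k = 0 then 1 else if k = 1 then 0
      else if k = n - 1 then n else if k = n then n - 1 else k) := by
  by_cases hk : k < n + 1
  · rw [coord_of_lt _ hk, σmap, ← coord_val v]
    congr 1
    simp only [τ]
    split_ifs <;> omega
  · rw [coord_of_gt _ (by omega), if_neg (by omega), if_neg (by omega), if_neg (by omega),
      if_neg (by omega), coord_of_gt _ (by omega)]

lemma coord_δ {k : ℕ} (hk : k < n + 1) :
    coord (δ n) k = if k ≤ 1 ∨ n - 1 ≤ k then 1 else 2 := by
  rw [coord_of_lt _ hk]; simp only [δ]; split_ifs <;> omega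

lemma add_σmap_apply_zero (hn : 4 ≤ n) (v : Q n) : (v + σmap n v) 0 = v 0 + v 1 := by
  rw [← coord_zero (v + σmap n v), coord_add, Pi.add_apply, coord_σmap hn, if_pos rfl,
    coord_zero, coord_one (by omega)]

lemma δ_apply_zero : δ n 0 = 1 := if_pos (Or.inl rfl)

/-- Rooted at node `2`, the tree `D_n^{(1)}` has the edges `{parent n j, j}` for `j ≠ 2`. -/
def parent (n j : ℕ) : ℕ := if j ≤ 1 then 2 else if j = n then n - 2 else j - 1

lemma parent_lt (hn : 4 ≤ n) {j : ℕ} (hj : j < n + 1) : parent n j < n + 1 := by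
  unfold parent; split_ifs <;> omega

lemma CM_eq_ite_parent (hn : 4 ≤ n) (i j : Fin (n + 1)) :
    CM n i j = (if (i : ℕ) = j then 2 else 0) -
      (if (j : ℕ) ≠ 2 ∧ (i : ℕ) = parent n j then 1 else 0) -
      (if (i : ℕ) ≠ 2 ∧ (j : ℕ) = parent n i then 1 else 0) := by
  have := i.isLt; have := j.isLt
  simp only [CM, parent, Fin.ext_iff]
  split_ifs <;> omega

lemma sum_range_sum_range_ite_parent (hn : 4 ≤ n) (f : ℕ → ℕ → ℤ) :
    ∑ i ∈ range (n + 1), ∑ j ∈ range (n + 1),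
      (if j ≠ 2 ∧ i = parent n j then f i j else 0) =
    ∑ j ∈ range (n + 1), if j = 2 then 0 else f (parent n j) j := by
  rw [sum_comm]
  refine sum_congr rfl fun j hj => ?_
  split_ifs with h
  · simp [h]
  · simp [h, mem_range.2 (parent_lt hn (mem_range.1 hj))]

lemma B_self_eq_parent (hn : 4 ≤ n) (v : Q n) :
    B n v v = 2 * ∑ i ∈ range (n + 1), coord v i ^ 2 -
      2 * ∑ j ∈ range (n + 1), if j = 2 then 0 else coord v (parent n j) * coord v j := by
  set u := coord v
  let G : ℕ → ℕ → ℤ := fun i j =>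
    2 * (if i = j then u i * u j else 0) -
      (if j ≠ 2 ∧ i = parent n j then u i * u j else 0) -
      (if i ≠ 2 ∧ j = parent n i then u j * u i else 0)
  have key : ∀ i j : Fin (n + 1), v i * CM n i j * v j = G i j := by
    intro i j
    rw [CM_eq_ite_parent hn]
    simp only [G, u, coord_val]
    split_ifs <;> ring
  simp only [B, key]
  rw [Fin.sum_univ_eq_sum_range (fun i => ∑ j : Fin (n + 1), G i j)]
  simp only [Fin.sum_univ_eq_sum_range (G _), G, sum_sub_distrib, ← mul_sum]
  have hdiag : ∑ i ∈ range (n + 1), ∑ j ∈ range (n + 1), (if i = j then u i * u j else 0) =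
      ∑ i ∈ range (n + 1), u i ^ 2 :=
    sum_congr rfl fun i hi => by simp [hi, sq]
  have hswap : ∑ i ∈ range (n + 1), ∑ j ∈ range (n + 1),
      (if i ≠ 2 ∧ j = parent n i then u j * u i else 0) =
      ∑ j ∈ range (n + 1), if j = 2 then 0 else u (parent n j) * u j := by
    rw [sum_comm]; exact sum_range_sum_range_ite_parent hn (fun i j => u i * u j)
  rw [sum_range_sum_range_ite_parent hn (fun i j => u i * u j), hdiag, hswap]
  ring

/-- The quadratic form of the path `1 - 2 - ⋯ - (N + 1)`. -/
lemma pathForm_eq_sum_sq (u : ℕ → ℤ) (N : ℕ) :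
    2 * ∑ k ∈ range (N + 1), u (k + 1) ^ 2 - 2 * ∑ k ∈ range N, u (k + 1) * u (k + 2) =
      u 1 ^ 2 + ∑ k ∈ range N, (u (k + 2) - u (k + 1)) ^ 2 + u (N + 1) ^ 2 := by
  induction N with
  | zero => simp only [zero_add, range_one, sum_singleton, range_zero, sum_empty]; ring
  | succ N ih =>
    rw [sum_range_succ _ (N + 1), sum_range_succ (fun k => u (k + 1) * u (k + 2)),
      sum_range_succ (fun k => (u (k + 2) - u (k + 1)) ^ 2)]
    linear_combination ih

lemma parentForm_eq_sum_sq (u : ℕ → ℤ) (hn : 4 ≤ n) (hu : u 0 = 0) :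
    2 * ∑ i ∈ range (n + 1), u i ^ 2 -
      2 * ∑ j ∈ range (n + 1), (if j = 2 then 0 else u (parent n j) * u j) =
    u 1 ^ 2 + ∑ k ∈ range (n - 3), (u (k + 2) - u (k + 1)) ^ 2 +
      (u (n - 1) + u n - u (n - 2)) ^ 2 + (u n - u (n - 1)) ^ 2 := by
  obtain ⟨m, rfl⟩ : ∃ m, n = m + 4 := ⟨n - 4, by omega⟩
  have hsq : ∑ i ∈ range (m + 5), u i ^ 2 =
      u 0 ^ 2 + ∑ k ∈ range (m + 2), u (k + 1) ^ 2 + u (m + 3) ^ 2 + u (m + 4) ^ 2 := by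
    rw [sum_range_succ, sum_range_succ, sum_range_succ' _ (m + 2)]; ring
  have hpar : ∑ j ∈ range (m + 5), (if j = 2 then 0 else u (parent (m + 4) j) * u j) =
      u 0 * u 2 + u 1 * u 2 + ∑ k ∈ range (m + 1), u (k + 2) * u (k + 3) +
        u (m + 2) * u (m + 4) := by
    rw [sum_range_succ, sum_range_succ' _ (m + 3), sum_range_succ' _ (m + 2),
      sum_range_succ' _ (m + 1)]
    have hmid : ∀ k ∈ range (m + 1), (if k + 1 + 1 + 1 = 2 then 0 else
        u (parent (m + 4) (k + 1 + 1 + 1)) * u (k + 1 + 1 + 1)) = u (k + 2) * u (k + 3) := by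
      intro k hk
      rw [mem_range] at hk
      rw [if_neg (by omega), parent, if_neg (by omega), if_neg (by omega)]
      rfl
    have htop : (if m + 4 = 2 then 0 else u (parent (m + 4) (m + 4)) * u (m + 4)) =
        u (m + 2) * u (m + 4) := by
      rw [if_neg (by omega), parent, if_neg (by omega), if_pos rfl]; rfl
    rw [sum_congr rfl hmid, htop]
    norm_num [parent]
    ring
  have hpath := pathForm_eq_sum_sq u (m + 1)
  have hshift := sum_range_succ' (fun k => u (k + 1) * u (k + 2)) (m + 1)
  have hlast := sum_range_succ (fun k => u (k + 1) * u (k + 2)) (m + 1)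
  rw [hsq, hpar, show m + 4 - 3 = m + 1 from rfl, show m + 4 - 1 = m + 3 from rfl,
    show m + 4 - 2 = m + 2 from rfl, hu]
  linear_combination hpath + 2 * hshift - 2 * hlast

lemma B_self_eq_sum_sq (hn : 4 ≤ n) (v : Q n) (hv : v 0 = 0) :
    B n v v = coord v 1 ^ 2 + ∑ k ∈ range (n - 3), (coord v (k + 2) - coord v (k + 1)) ^ 2 +
      (coord v (n - 1) + coord v n - coord v (n - 2)) ^ 2 + (coord v n - coord v (n - 1)) ^ 2 :=
  (B_self_eq_parent hn v).trans (parentForm_eq_sum_sq _ hn (by rwa [coord_zero]))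

lemma eq_of_sum_sq_sub_eq_zero (u : ℕ → ℤ) {N : ℕ}
    (h : ∑ k ∈ range N, (u (k + 2) - u (k + 1)) ^ 2 = 0) : ∀ k ≤ N, u (k + 1) = u 1 := by
  rw [sum_eq_zero_iff_of_nonneg fun _ _ => sq_nonneg _] at h
  intro k hk
  induction k with
  | zero => rfl
  | succ k ih =>
    have := pow_eq_zero_iff two_ne_zero |>.mp (h k (mem_range.2 hk))
    rw [← ih (by omega)]; linarith

lemma coord_one_eq_zero_or_one (hn : 4 ≤ n) {α : Q n} (hpos : ∀ i, 0 ≤ α i)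
    (hα : B n α α = 2) (hα0 : α 0 = 0) : coord α 1 = 0 ∨ coord α 1 = 1 := by
  rw [B_self_eq_sum_sq hn _ hα0] at hα
  have hS := sum_nonneg fun k (_ : k ∈ range (n - 3)) =>
    sq_nonneg (coord α (k + 2) - coord α (k + 1))
  have hA := sq_nonneg (coord α (n - 1) + coord α n - coord α (n - 2))
  have hC := sq_nonneg (coord α n - coord α (n - 1))
  have h1 : 0 ≤ coord α 1 := by rw [coord_one (by omega)]; exact hpos 1
  have : coord α 1 < 2 := by nlinarith
  omega

lemma add_σmap_eq_δ (hn : 4 ≤ n) {α : Q n} (hα : B n α α = 2) (hα0 : α 0 = 0)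
    (hα1 : coord α 1 = 1) (hαn : coord α n ≠ coord α (n - 1)) : α + σmap n α = δ n := by
  rw [B_self_eq_sum_sq hn _ hα0, hα1] at hα
  have hS := sum_nonneg fun k (_ : k ∈ range (n - 3)) =>
    sq_nonneg (coord α (k + 2) - coord α (k + 1))
  have hA := sq_nonneg (coord α (n - 1) + coord α n - coord α (n - 2))
  have hC : 1 ≤ (coord α n - coord α (n - 1)) ^ 2 :=
    (one_le_sq_iff_one_le_abs _).mpr (Int.one_le_abs (sub_ne_zero.2 hαn))
  have hchain := eq_of_sum_sq_sub_eq_zero (coord α) (N := n - 3) (by linarith)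
  have hmid : ∀ k, 1 ≤ k → k ≤ n - 2 → coord α k = 1 := fun k hk1 hk2 => by
    obtain ⟨j, rfl⟩ : ∃ j, k = j + 1 := ⟨k - 1, by omega⟩
    rw [hchain j (by omega), hα1]
  have hend : coord α (n - 1) + coord α n = 1 := by
    rw [← hmid (n - 2) (by omega) le_rfl]
    linear_combination pow_eq_zero_iff two_ne_zero |>.mp
      (by linarith : (coord α (n - 1) + coord α n - coord α (n - 2)) ^ 2 = 0)
  have h0 : coord α 0 = 0 := by rwa [coord_zero]
  refine eq_of_coord_eq fun k hk => ?_
  have hαk := hmid k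
  rw [coord_add, Pi.add_apply, coord_σmap hn, coord_δ hk]
  obtain rfl | rfl | hk' | rfl | rfl :
      k = 0 ∨ k = 1 ∨ (2 ≤ k ∧ k ≤ n - 2) ∨ k = n - 1 ∨ k = n := by omega
  all_goals split_ifs <;> first | contradiction | omega

def chainRoot (n : ℕ) : Q n := fun i => if 1 ≤ (i : ℕ) ∧ (i : ℕ) ≤ n - 1 then 1 else 0

lemma coord_chainRoot (k : ℕ) :
    coord (chainRoot n) k = if 1 ≤ k ∧ k ≤ n - 1 then 1 else 0 := by
  by_cases hk : k < n + 1
  · rw [coord_of_lt _ hk]; rfl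
  · rw [coord_of_gt _ (by omega), if_neg (by omega)]

lemma chainRoot_add_σmap (hn : 4 ≤ n) : chainRoot n + σmap n (chainRoot n) = δ n := by
  refine eq_of_coord_eq fun k hk => ?_
  rw [coord_add, Pi.add_apply, coord_σmap hn, coord_δ hk]
  simp only [coord_chainRoot]
  split_ifs <;> omega

lemma add_σmap_eq_δ_add_sub_chainRoot (hn : 4 ≤ n) (α : Q n) :
    α + σmap n α = δ n + (α - chainRoot n) + σmap n (α - chainRoot n) := by
  rw [← chainRoot_add_σmap hn, show σmap n (α - chainRoot n) =
    σmap n α - σmap n (chainRoot n) from rfl]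
  abel

lemma sub_chainRoot_mem_Δ0' (hn : 4 ≤ n) {α : Q n} (hα : B n α α = 2) (hα0 : α 0 = 0)
    (hα1 : coord α 1 = 1) (hαn : coord α n = coord α (n - 1)) : α - chainRoot n ∈ Δ0' n := by
  set β := α - chainRoot n
  have hβ : ∀ k, coord β k = coord α k - if 1 ≤ k ∧ k ≤ n - 1 then 1 else 0 := fun k => by
    rw [coord_sub, Pi.sub_apply, coord_chainRoot]
  have hβ0 : β 0 = 0 := by
    rw [← coord_zero β, hβ, coord_zero, hα0, if_neg (by omega), sub_zero]
  have hβ1 : coord β 1 = 0 := by rw [hβ, hα1, if_pos (by omega), sub_self]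
  refine ⟨?_, hβ0, (coord_one (by omega) β).symm.trans hβ1⟩
  have hdiff : ∀ k ∈ range (n - 3), (coord β (k + 2) - coord β (k + 1)) ^ 2 =
      (coord α (k + 2) - coord α (k + 1)) ^ 2 := fun k hk => by
    rw [mem_range] at hk
    rw [hβ, hβ, if_pos (by omega), if_pos (by omega)]; ring
  have hβn : coord β n = coord α n := by rw [hβ, if_neg (by omega), sub_zero]
  have hβn1 : coord β (n - 1) = coord α (n - 1) - 1 := by rw [hβ, if_pos (by omega)]
  have hβn2 : coord β (n - 2) = coord α (n - 2) - 1 := by rw [hβ, if_pos (by omega)]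
  rw [B_self_eq_sum_sq hn _ hα0, hα1] at hα
  rw [B_self_eq_sum_sq hn _ hβ0, sum_congr rfl hdiff, hβ1, hβn, hβn1, hβn2]
  linear_combination hα + 2 * hαn

lemma σmap_sub_chainRoot_ne (hn : 4 ≤ n) {α : Q n} (hαn : coord α n = coord α (n - 1)) :
    σmap n (α - chainRoot n) ≠ α - chainRoot n := by
  intro h
  have := congrFun (congrArg coord h) n
  rw [coord_σmap hn, if_neg (by omega), if_neg (by omega), if_neg (by omega), if_pos rfl,
    coord_sub, Pi.sub_apply, Pi.sub_apply, coord_chainRoot, coord_chainRoot,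
    if_pos (by omega), if_neg (by omega)] at this
  omega

lemma B_self_ne_two_of_add_σmap_eq_zero (hn : 4 ≤ n) {β : Q n} (hβ0 : β 0 = 0)
    (h : β + σmap n β = 0) : B n β β ≠ 2 := by
  have hc : ∀ k, coord β k + coord β (if k = 0 then 1 else if k = 1 then 0
      else if k = n - 1 then n else if k = n then n - 1 else k) = 0 := fun k => by
    rw [← coord_σmap hn, ← Pi.add_apply, ← coord_add, h]; simp [coord]
  have h0 : coord β 0 = 0 := by rwa [coord_zero]
  have hmid : ∀ k, 1 ≤ k → k ≤ n - 2 → coord β k = 0 := by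
    intro k hk1 hk2
    have := hc k
    split_ifs at this <;> omega
  have hend : coord β (n - 1) + coord β n = 0 := by
    have := hc (n - 1); rwa [if_neg (by omega), if_neg (by omega), if_pos rfl] at this
  rw [B_self_eq_sum_sq hn _ hβ0, hmid 1 le_rfl (by omega), hmid (n - 2) (by omega) le_rfl,
    sum_eq_zero fun k hk => by
      rw [mem_range] at hk
      rw [hmid (k + 2) (by omega) (by omega), hmid (k + 1) (by omega) (by omega)]; ring,
    show coord β (n - 1) = - coord β n by omega]
  intro h2
  have : 4 * coord β n ^ 2 = 2 := by linear_combination h2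
  omega

lemma mem_Δ0'Pos_or_add_σmap_eq (hn : 4 ≤ n) {α : Q n} (hα : α ∈ Δ0Pos n) :
    α ∈ Δ0'Pos n ∨ (∃ m : ℤ, 0 < m ∧ α + σmap n α = m • δ n) ∨
      ∃ β ∈ Δ0' n, σmap n β ≠ β ∧ α + σmap n α = δ n + β + σmap n β := by
  obtain ⟨⟨hpos, hα⟩, hα0⟩ := hα
  rcases coord_one_eq_zero_or_one hn hpos hα hα0 with h1 | h1
  · exact Or.inl ⟨⟨hα, hα0, (coord_one (by omega) α).symm.trans h1⟩, hpos⟩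
  by_cases hαn : coord α n = coord α (n - 1)
  · exact Or.inr <| Or.inr ⟨_, sub_chainRoot_mem_Δ0' hn hα hα0 h1 hαn,
      σmap_sub_chainRoot_ne hn hαn, add_σmap_eq_δ_add_sub_chainRoot hn α⟩
  · exact Or.inr <| Or.inl ⟨1, one_pos, by rw [one_smul, add_σmap_eq_δ hn hα hα0 h1 hαn]⟩

theorem statement6 (n : ℕ) (hn : 4 ≤ n) : ∀ α ∈ Δ0Pos n,
    ((α ∈ Δ0'Pos n) ∨
      (∃ m : ℤ, 0 < m ∧ α + σmap n α = m • δ n) ∨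
      (∃ β ∈ Δ0' n, σmap n β ≠ β ∧ α + σmap n α = δ n + β + σmap n β)) ∧
    ¬((α ∈ Δ0'Pos n) ∧ (∃ m : ℤ, 0 < m ∧ α + σmap n α = m • δ n)) ∧
    ¬((α ∈ Δ0'Pos n) ∧
      (∃ β ∈ Δ0' n, σmap n β ≠ β ∧ α + σmap n α = δ n + β + σmap n β)) ∧
    ¬((∃ m : ℤ, 0 < m ∧ α + σmap n α = m • δ n) ∧
      (∃ β ∈ Δ0' n, σmap n β ≠ β ∧ α + σmap n α = δ n + β + σmap n β)) := by
  intro α hα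
  refine ⟨mem_Δ0'Pos_or_add_σmap_eq hn hα, ?_, ?_, ?_⟩
  · rintro ⟨⟨⟨-, hα0, hα1⟩, -⟩, m, hm, h⟩
    have h0 := congrFun h 0
    rw [add_σmap_apply_zero hn, hα0, hα1, Pi.smul_apply, δ_apply_zero, smul_eq_mul] at h0
    omega
  · rintro ⟨⟨⟨-, hα0, hα1⟩, -⟩, β, ⟨-, hβ0, hβ1⟩, -, h⟩
    have h0 := congrFun h 0
    rw [add_σmap_apply_zero hn, hα0, hα1, add_assoc, Pi.add_apply, add_σmap_apply_zero hn,
      δ_apply_zero, hβ0, hβ1] at h0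
    omega
  · rintro ⟨⟨m, -, hm⟩, β, ⟨hβ, hβ0, hβ1⟩, -, h⟩
    rw [hm, add_assoc] at h
    have hm1 : m = 1 := by
      have h0 := congrFun h 0
      rw [Pi.smul_apply, Pi.add_apply, add_σmap_apply_zero hn, δ_apply_zero, hβ0, hβ1,
        smul_eq_mul] at h0
      omega
    rw [hm1, one_smul, left_eq_add] at h
    exact B_self_ne_two_of_add_σmap_eq_zero hn hβ0 h hβ

end Stmt6
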